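/- arXiv:2602.09414 — 2 statements merged into one kernel-verified Lean document; each statement's English description precedes it below -/
import Mathlib

section
/- Let D ∈ ℝ^{3×n} have rank 3, let W = Dᵀ(DDᵀ)⁻¹ K (DDᵀ)⁻¹ D with K = diag(k₁,k₂,k₃), k₁>k₂>k₃≥1, and in the noise-free case let E = Rᵀ D for R ∈ SO(3). Then for any estimate R̂ ∈ SO(3), the Wahba cost (1/2)⟨D − R̂E, (D − R̂E)W⟩ equals ⟨K, I − Q⟩ where Q = R R̂ᵀ. -/
open Matrix

/-- Auxiliary: the core trace computation. -/
lemma stmt9_aux {n : ℕ} (K Q : Matrix (Fin 3) (Fin 3) ℝ)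
    (D : Matrix (Fin 3) (Fin n) ℝ) (W : Matrix (Fin n) (Fin n) ℝ)
    (hDWD : D * W * Dᵀ = K) (hK : Kᵀ = K) (hQ : Q * Qᵀ = 1) :
    (1/2 : ℝ) * ((D - Qᵀ * D)ᵀ * ((D - Qᵀ * D) * W)).trace = (Kᵀ * (1 - Q)).trace := by
  have hA : D - Qᵀ * D = (1 - Qᵀ) * D := by rw [Matrix.sub_mul, Matrix.one_mul]
  have h1 : ((D - Qᵀ * D)ᵀ * ((D - Qᵀ * D) * W)).trace
      = (((1 - Qᵀ) * D * W) * ((1 - Qᵀ) * D)ᵀ).trace := by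
    rw [hA, trace_mul_comm]
  have h2 : ((1 - Qᵀ) * D * W) * ((1 - Qᵀ) * D)ᵀ = (1 - Qᵀ) * K * (1 - Qᵀ)ᵀ := by
    rw [transpose_mul, ← hDWD]
    simp only [Matrix.mul_assoc]
  have h3 : ((1 - Qᵀ) * K * (1 - Qᵀ)ᵀ).trace = ((1 - Qᵀ)ᵀ * (1 - Qᵀ) * K).trace := by
    rw [Matrix.trace_mul_cycle]
  have h4 : (1 - Qᵀ)ᵀ * (1 - Qᵀ) = 2 • (1 : Matrix (Fin 3) (Fin 3) ℝ) - Q - Qᵀ := by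
    have : (1 - Qᵀ)ᵀ = 1 - Q := by simp
    rw [this, sub_mul, mul_sub, mul_sub, one_mul, one_mul, mul_one, hQ, two_smul]
    abel
  have h5 : (Qᵀ * K).trace = (Kᵀ * Q).trace := by
    rw [← Matrix.trace_transpose (Qᵀ * K), transpose_mul, transpose_transpose]
  have h6 : (Q * K).trace = (Kᵀ * Q).trace := by
    rw [hK, trace_mul_comm]
  rw [h1, h2, h3, h4]
  rw [sub_mul, sub_mul, Matrix.smul_mul, one_mul, trace_sub, trace_sub, trace_smul,
    Matrix.mul_sub, Matrix.mul_one, trace_sub, h5, h6, hK]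
  push_cast
  ring

theorem stmt9 (n : ℕ) (D : Matrix (Fin 3) (Fin n) ℝ) (hrank : D.rank = 3)
    (k₁ k₂ k₃ : ℝ) (h12 : k₁ > k₂) (h23 : k₂ > k₃) (h3 : k₃ ≥ 1)
    (R Rh : Matrix (Fin 3) (Fin 3) ℝ)
    (hR : Rᵀ * R = 1) (hdR : R.det = 1)
    (hRh : Rhᵀ * Rh = 1) (hdRh : Rh.det = 1) :
    let K : Matrix (Fin 3) (Fin 3) ℝ := Matrix.diagonal ![k₁, k₂, k₃]
    let W : Matrix (Fin n) (Fin n) ℝ := Dᵀ * (D * Dᵀ)⁻¹ * K * (D * Dᵀ)⁻¹ * D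
    let E : Matrix (Fin 3) (Fin n) ℝ := Rᵀ * D
    let Q : Matrix (Fin 3) (Fin 3) ℝ := R * Rhᵀ
    (1/2 : ℝ) * ((D - Rh * E)ᵀ * ((D - Rh * E) * W)).trace = (Kᵀ * (1 - Q)).trace := by
  intro K W E Q
  -- D * Dᵀ is invertible
  have hrk : (D * Dᵀ).rank = 3 := by rw [Matrix.rank_self_mul_transpose]; exact hrank
  have hUnit : IsUnit (D * Dᵀ) := by
    rw [← Matrix.mulVec_surjective_iff_isUnit]
    have hrange : LinearMap.range (D * Dᵀ).mulVecLin = ⊤ := by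
      apply Submodule.eq_top_of_finrank_eq
      rw [← Matrix.rank, hrk]
      simp [Module.finrank_pi]
    intro v
    obtain ⟨w, hw⟩ := LinearMap.range_eq_top.mp hrange v
    exact ⟨w, hw⟩
  have hdet : IsUnit (D * Dᵀ).det := (Matrix.isUnit_iff_isUnit_det _).mp hUnit
  have hinv1 : (D * Dᵀ)⁻¹ * (D * Dᵀ) = 1 := Matrix.nonsing_inv_mul _ hdet
  have hinv2 : (D * Dᵀ) * (D * Dᵀ)⁻¹ = 1 := Matrix.mul_nonsing_inv _ hdet
  -- D * W * Dᵀ = K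
  have hDWD : D * W * Dᵀ = K := by
    show D * (Dᵀ * (D * Dᵀ)⁻¹ * K * (D * Dᵀ)⁻¹ * D) * Dᵀ = K
    calc D * (Dᵀ * (D * Dᵀ)⁻¹ * K * (D * Dᵀ)⁻¹ * D) * Dᵀ
        = (D * Dᵀ * (D * Dᵀ)⁻¹) * K * ((D * Dᵀ)⁻¹ * (D * Dᵀ)) := by
          simp only [Matrix.mul_assoc]
      _ = K := by rw [hinv1, hinv2, Matrix.one_mul, Matrix.mul_one]
  -- Q is orthogonal
  have hRR : R * Rᵀ = 1 := mul_eq_one_comm.mp hR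
  have hQ : Q * Qᵀ = 1 := by
    show (R * Rhᵀ) * (R * Rhᵀ)ᵀ = 1
    rw [transpose_mul, transpose_transpose]
    calc R * Rhᵀ * (Rh * Rᵀ) = R * (Rhᵀ * Rh) * Rᵀ := by noncomm_ring
      _ = 1 := by rw [hRh, Matrix.mul_one, hRR]
  have hKs : Kᵀ = K := Matrix.diagonal_transpose _
  have hE : D - Rh * E = D - Qᵀ * D := by
    show D - Rh * (Rᵀ * D) = D - (R * Rhᵀ)ᵀ * D
    rw [transpose_mul, transpose_transpose, Matrix.mul_assoc]
  rw [hE]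
  exact stmt9_aux K Q D W hDWD hKs hQ
end

section
/- Let K = diag(k₁,k₂,k₃) with k₁ > k₂ > k₃ ≥ 1 and define s_K(Q) = vex(KQ − QᵀK) for Q ∈ SO(3). Then s_K(Q) = 0 if and only if Q belongs to the set {I, diag(−1,−1,1), diag(1,−1,−1), diag(−1,1,−1)}. -/
open Matrix

def vex (S : Matrix (Fin 3) (Fin 3) ℝ) : Fin 3 → ℝ :=
  ![S 2 1, S 0 2, S 1 0]

lemma aux_two_sq (a b x y : ℝ) (ha : 0 < a) (hb : 0 < b)
    (h : a * x ^ 2 + b * y ^ 2 = 0) : x = 0 ∧ y = 0 := by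
  have hx : x ^ 2 = 0 := by
    nlinarith [mul_nonneg ha.le (sq_nonneg x), mul_nonneg hb.le (sq_nonneg y)]
  have hy : y ^ 2 = 0 := by
    nlinarith [mul_nonneg ha.le (sq_nonneg x), mul_nonneg hb.le (sq_nonneg y)]
  exact ⟨pow_eq_zero_iff two_ne_zero |>.mp hx, pow_eq_zero_iff two_ne_zero |>.mp hy⟩

lemma aux_one_sq (a x : ℝ) (ha : 0 < a) (h : a * x ^ 2 = 0) : x = 0 := by
  have : x ^ 2 = 0 := by
    rcases mul_eq_zero.mp h with h' | h'
    · exact absurd h' ha.ne'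
    · exact h'
  exact pow_eq_zero_iff two_ne_zero |>.mp this

set_option maxHeartbeats 1000000 in
theorem stmt11 (k₁ k₂ k₃ : ℝ) (h12 : k₁ > k₂) (h23 : k₂ > k₃) (h3 : k₃ ≥ 1)
    (Q : Matrix (Fin 3) (Fin 3) ℝ) (hQ : Qᵀ * Q = 1) (hdQ : Q.det = 1) :
    let K : Matrix (Fin 3) (Fin 3) ℝ := Matrix.diagonal ![k₁, k₂, k₃]
    vex (K * Q - Qᵀ * K) = 0 ↔
      Q = 1 ∨ Q = Matrix.diagonal ![-1, -1, 1] ∨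
      Q = Matrix.diagonal ![1, -1, -1] ∨ Q = Matrix.diagonal ![-1, 1, -1] := by
  intro K
  have hk3 : (0:ℝ) < k₃ := lt_of_lt_of_le one_pos h3
  have hk2 : (0:ℝ) < k₂ := lt_trans hk3 h23
  have hk1 : (0:ℝ) < k₁ := lt_trans hk2 h12
  have p1 : (0:ℝ) < k₁ ^ 2 - k₂ ^ 2 := by nlinarith
  have p2 : (0:ℝ) < k₁ ^ 2 - k₃ ^ 2 := by nlinarith
  have p3 : (0:ℝ) < k₂ ^ 2 - k₃ ^ 2 := by nlinarith
  have hQ' : Q * Qᵀ = 1 := by rwa [mul_eq_one_comm] at hQ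
  constructor
  · intro hv
    have h1 := congrFun hv 0
    have h2 := congrFun hv 1
    have h3' := congrFun hv 2
    simp only [K] at h1 h2 h3'
    simp [vex, Matrix.mul_apply, Fin.sum_univ_three, Matrix.diagonal] at h1 h2 h3'
    have c00 := congrFun (congrFun hQ 0) 0
    have c11 := congrFun (congrFun hQ 1) 1
    have r00 := congrFun (congrFun hQ' 0) 0
    have r11 := congrFun (congrFun hQ' 1) 1
    have r22 := congrFun (congrFun hQ' 2) 2
    simp [Matrix.mul_apply, Fin.sum_univ_three, Matrix.one_apply] at c00 c11 r00 r11 r22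
    -- h1 : k₃ * Q 2 1 - Q 1 2 * k₂ = 0
    -- h2 : k₁ * Q 0 2 - Q 2 0 * k₃ = 0
    -- h3' : k₂ * Q 1 0 - Q 0 1 * k₁ = 0
    have key : (k₁ ^ 2 - k₂ ^ 2) * Q 1 0 ^ 2 + (k₁ ^ 2 - k₃ ^ 2) * Q 2 0 ^ 2 = 0 := by
      linear_combination k₁ ^ 2 * c00 - k₁ ^ 2 * r00 -
        (k₂ * Q 1 0 + Q 0 1 * k₁) * h3' + (k₁ * Q 0 2 + Q 2 0 * k₃) * h2
    obtain ⟨hb, hd⟩ := aux_two_sq _ _ _ _ p1 p2 key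
    have ha : Q 0 1 = 0 := by
      have hz : Q 0 1 * k₁ = 0 := by
        rw [hb] at h3'; linarith
      exact (mul_eq_zero.mp hz).resolve_right hk1.ne'
    have hc : Q 0 2 = 0 := by
      have hz : k₁ * Q 0 2 = 0 := by
        rw [hd] at h2; linarith
      exact (mul_eq_zero.mp hz).resolve_left hk1.ne'
    have key2 : (k₂ ^ 2 - k₃ ^ 2) * Q 1 2 ^ 2 = 0 := by
      linear_combination k₃ ^ 2 * c11 - k₃ ^ 2 * r11 -
        (k₃ * Q 2 1 + Q 1 2 * k₂) * h1 - k₃ ^ 2 * Q 0 1 * ha + k₃ ^ 2 * Q 1 0 * hb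
    have he : Q 1 2 = 0 := aux_one_sq _ _ p3 key2
    have hf : Q 2 1 = 0 := by
      have hz : k₃ * Q 2 1 = 0 := by
        rw [he] at h1; linarith
      exact (mul_eq_zero.mp hz).resolve_left hk3.ne'
    have d0 : Q 0 0 * Q 0 0 = 1 := by
      linear_combination r00 - Q 0 1 * ha - Q 0 2 * hc
    have d1 : Q 1 1 * Q 1 1 = 1 := by
      linear_combination r11 - Q 1 0 * hb - Q 1 2 * he
    have d2 : Q 2 2 * Q 2 2 = 1 := by
      linear_combination r22 - Q 2 0 * hd - Q 2 1 * hf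
    have hdet : Q 0 0 * Q 1 1 * Q 2 2 = 1 := by
      rw [Matrix.det_fin_three, ha, hb, hc, hd, he, hf] at hdQ
      linear_combination hdQ
    have e0 := mul_self_eq_one_iff.mp d0
    have e1 := mul_self_eq_one_iff.mp d1
    have e2 := mul_self_eq_one_iff.mp d2
    have hQform : ∀ x y z : ℝ, Q 0 0 = x → Q 1 1 = y → Q 2 2 = z →
        Q = Matrix.diagonal ![x, y, z] := by
      intro x y z hx hy hz
      ext i j
      fin_cases i <;> fin_cases j <;>
        simp [Matrix.diagonal, ha, hb, hc, hd, he, hf, hx, hy, hz]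
    rcases e0 with h0 | h0 <;> rcases e1 with he1 | he1 <;> rcases e2 with he2 | he2
    · left
      rw [hQform 1 1 1 h0 he1 he2]
      ext i j
      fin_cases i <;> fin_cases j <;> simp [Matrix.diagonal, Matrix.one_apply]
    · exfalso; rw [h0, he1, he2] at hdet; norm_num at hdet
    · exfalso; rw [h0, he1, he2] at hdet; norm_num at hdet
    · right; right; left; exact hQform 1 (-1) (-1) h0 he1 he2
    · exfalso; rw [h0, he1, he2] at hdet; norm_num at hdet
    · right; right; right; exact hQform (-1) 1 (-1) h0 he1 he2
    · right; left; exact hQform (-1) (-1) 1 h0 he1 he2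
    · exfalso; rw [h0, he1, he2] at hdet; norm_num at hdet
  · intro h
    rcases h with h | h | h | h <;> subst h <;>
      funext i <;> fin_cases i <;>
      simp [vex, K, Matrix.mul_apply, Fin.sum_univ_three, Matrix.diagonal, Matrix.one_apply]
end
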